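/- Under the stated setup, fix λ ∈ ℝ^n with Z_λ finite and assume for each i = 1,…,n there exists x ∈ X with ν_i(x) > 0. Then γ ↦ A(γ, λ) is strictly concave on ℝ^n, and a point γ̂ ∈ ℝ^n is a global maximizer of A(·, λ) if and only if it satisfies, for each i = 1,…,n, the stationarity equations ∑_{y∈𝒴} k_λ[ν_i] = ∑_{y∈𝒴} p_λ[ν_i e^{γ̂_i ν_#}]; moreover such a maximizer, if it exists, is unique. -/

import Mathlib

/-!
`A(·, λ)` separates as `|𝒴| + ∑ᵢ gᵢ(γᵢ)` with `gᵢ(t) = Kᵢ t - |𝒴| ψᵢ(t)` (`auxCoord`),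
where `Kᵢ = ∑_{y ∈ 𝒴} k_λ[νᵢ]` (`condCount`) and `ψᵢ(t) = p_λ[ν̄ᵢ e^{t ν_#}]`
(`scaledMoment`). The derivative `ψᵢ'(t) = p_λ[νᵢ e^{t ν_#}]` (`expMoment`) is strictly
increasing because `p_λ > 0` and `νᵢ` is positive somewhere, so every `gᵢ` is strictly
concave, hence so is `A(·, λ)`. A point maximizes the separable sum iff each coordinate
maximizes its `gᵢ`, i.e. iff `gᵢ'(γᵢ) = 0`, which is the stationarity equation; uniqueness
holds for maxima of any strictly concave function.
-/

/- Common setup: log-linear models over proof trees (complete data X) and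
   queries (incomplete data Y). -/

variable {X Y : Type*}

/-- `ν_#(x) = ∑ i, ν_i(x)`. -/
def nuSharp {n : ℕ} (ν : Fin n → X → ℕ) (x : X) : ℕ := ∑ i, ν i x

/-- weighted property sum `λ·ν(x)`. -/
noncomputable def wdot {n : ℕ} (l : Fin n → ℝ) (ν : Fin n → X → ℕ) (x : X) : ℝ :=
  ∑ i, l i * (ν i x : ℝ)

/-- normalizing constant `Z_λ`. -/
noncomputable def Zpart (p0 : X → ℝ) {n : ℕ} (ν : Fin n → X → ℕ) (l : Fin n → ℝ) : ℝ :=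
  ∑' x : X, Real.exp (wdot l ν x) * p0 x

/-- log-linear distribution `p_λ(x)`. -/
noncomputable def pLL (p0 : X → ℝ) {n : ℕ} (ν : Fin n → X → ℕ) (l : Fin n → ℝ) (x : X) : ℝ :=
  (Zpart p0 ν l)⁻¹ * Real.exp (wdot l ν x) * p0 x

/-- incomplete-data probability `p_λ(y) = ∑_{x ∈ X(y)} p_λ(x)`. -/
noncomputable def pLLY (Yf : X → Y) (p0 : X → ℝ) {n : ℕ} (ν : Fin n → X → ℕ)
    (l : Fin n → ℝ) (y : Y) : ℝ :=
  ∑' x : {x : X // Yf x = y}, pLL p0 ν l x.1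

/-- incomplete-data log-likelihood `L(λ) = ∑_{y ∈ 𝒴} ln p_λ(y)`. -/
noncomputable def LL (Yf : X → Y) (p0 : X → ℝ) {n : ℕ} (ν : Fin n → X → ℕ)
    (𝒴 : Multiset Y) (h𝒴 : 𝒴 ≠ 0) (l : Fin n → ℝ) : ℝ :=
  (𝒴.map fun y => Real.log (pLLY Yf p0 ν l y)).sum

/-- expectation `p_λ[f]`. -/
noncomputable def pExp (p0 : X → ℝ) {n : ℕ} (ν : Fin n → X → ℕ) (l : Fin n → ℝ)
    (f : X → ℝ) : ℝ :=
  ∑' x : X, pLL p0 ν l x * f x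

/-- conditional expectation `k_λ[f]` given observed `y`. -/
noncomputable def kExp (Yf : X → Y) (p0 : X → ℝ) {n : ℕ} (ν : Fin n → X → ℕ)
    (l : Fin n → ℝ) (y : Y) (f : X → ℝ) : ℝ :=
  ∑' x : {x : X // Yf x = y}, (pLL p0 ν l x.1 / pLLY Yf p0 ν l y) * f x.1

/-- auxiliary function
`A(γ,λ) = ∑_{y∈𝒴} (1 + k_λ[γ·ν] − p_λ[∑ i, ν̄_i e^{γ_i ν_#}])`. -/
noncomputable def Aaux (Yf : X → Y) (p0 : X → ℝ) {n : ℕ} (ν : Fin n → X → ℕ)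
    (𝒴 : Multiset Y) (γ l : Fin n → ℝ) : ℝ :=
  (𝒴.map fun y =>
    1 + kExp Yf p0 ν l y (fun x => wdot γ ν x)
      - pExp p0 ν l (fun x =>
          ∑ i, ((ν i x : ℝ) / (nuSharp ν x : ℝ)) * Real.exp (γ i * (nuSharp ν x : ℝ)))).sum

open Set

section Separable

variable {ι α β : Type*} [Fintype ι]

lemma isMaxOn_univ_sum_apply_iff [DecidableEq ι] [AddCommMonoid β] [PartialOrder β]
    [IsOrderedCancelAddMonoid β] {g : ι → α → β} {x : ι → α} :
    IsMaxOn (fun y : ι → α => ∑ i, g i (y i)) univ x ↔ ∀ i, IsMaxOn (g i) univ (x i) := by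
  simp only [isMaxOn_univ_iff]
  refine ⟨fun h i t => ?_, fun h y => Finset.sum_le_sum fun i _ => h i (y i)⟩
  have key := h (Function.update x i t)
  simp only [Function.apply_update (fun j => g j), Finset.sum_update_of_mem (Finset.mem_univ i)]
    at key
  rw [← Finset.add_sum_erase _ _ (Finset.mem_univ i), ← Finset.sdiff_singleton_eq_erase] at key
  exact le_of_add_le_add_right key

lemma strictConcaveOn_univ_sum_apply {g : ι → ℝ → ℝ}
    (hg : ∀ i, StrictConcaveOn ℝ univ (g i)) :
    StrictConcaveOn ℝ univ (fun x : ι → ℝ => ∑ i, g i (x i)) := by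
  refine ⟨convex_univ, fun x _ y _ hxy a b ha hb hab => ?_⟩
  obtain ⟨j, hj⟩ := Function.ne_iff.mp hxy
  simp only [Pi.add_apply, Pi.smul_apply, smul_eq_mul, Finset.mul_sum, ← Finset.sum_add_distrib]
  exact Finset.sum_lt_sum (fun i _ => (hg i).concaveOn.2 trivial trivial ha.le hb.le hab)
    ⟨j, Finset.mem_univ j, (hg j).2 trivial trivial hj ha hb hab⟩

end Separable

lemma StrictAnti.strictConcaveOn_univ_of_hasDerivAt {g g' : ℝ → ℝ}
    (hg : ∀ t, HasDerivAt g (g' t) t) (hg' : StrictAnti g') : StrictConcaveOn ℝ univ g := by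
  have hderiv : deriv g = g' := funext fun t => (hg t).deriv
  exact (hderiv ▸ hg').strictConcaveOn_univ_of_deriv
    (continuous_iff_continuousAt.2 fun t => (hg t).continuousAt)

lemma ConcaveOn.isMaxOn_univ_iff_hasDerivAt {g : ℝ → ℝ} {g' s : ℝ} (hc : ConcaveOn ℝ univ g)
    (hd : HasDerivAt g g' s) : IsMaxOn g univ s ↔ g' = 0 := by
  refine ⟨fun h => (h.isLocalMax Filter.univ_mem).hasDerivAt_eq_zero hd, fun h => ?_⟩
  have hright : derivWithin (-g) (Ioi s) s = 0 := by
    rw [hd.neg.hasDerivWithinAt.derivWithin (uniqueDiffWithinAt_Ioi s), h, neg_zero]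
  have hmin := hc.neg.isMinOn_of_rightDeriv_eq_zero (by simp) hright
  exact isMaxOn_univ_iff.2 fun t => neg_le_neg_iff.1 (hmin (mem_univ t))

section LogLinear

variable (Yf : X → Y) (p0 : X → ℝ) {n : ℕ} (ν : Fin n → X → ℕ) (𝒴 : Multiset Y) (l : Fin n → ℝ)

noncomputable def expMoment (i : Fin n) (t : ℝ) : ℝ :=
  pExp p0 ν l fun x => (ν i x : ℝ) * Real.exp (t * nuSharp ν x)

noncomputable def scaledMoment (i : Fin n) (t : ℝ) : ℝ :=
  pExp p0 ν l fun x => ((ν i x : ℝ) / nuSharp ν x) * Real.exp (t * nuSharp ν x)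

noncomputable def condCount (i : Fin n) : ℝ :=
  (𝒴.map fun y => kExp Yf p0 ν l y fun x => (ν i x : ℝ)).sum

noncomputable def auxCoord (i : Fin n) (t : ℝ) : ℝ :=
  condCount Yf p0 ν 𝒴 l i * t - Multiset.card 𝒴 * scaledMoment p0 ν l i t

variable {p0 ν l}

lemma pLL_pos (hp0 : ∀ x, 0 < p0 x) (hZl : Summable fun x => Real.exp (wdot l ν x) * p0 x)
    (x : X) : 0 < pLL p0 ν l x := by
  have hterm : ∀ x, 0 < Real.exp (wdot l ν x) * p0 x := fun x => mul_pos (Real.exp_pos _) (hp0 x)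
  have hZ : 0 < Zpart p0 ν l := hZl.tsum_pos (fun x => (hterm x).le) x (hterm x)
  exact mul_pos (mul_pos (inv_pos.2 hZ) (Real.exp_pos _)) (hp0 x)

lemma pExp_lt_pExp (hp0 : ∀ x, 0 < p0 x)
    (hZl : Summable fun x => Real.exp (wdot l ν x) * p0 x) {f g : X → ℝ}
    (hf : Summable fun x => pLL p0 ν l x * f x) (hg : Summable fun x => pLL p0 ν l x * g x)
    (hle : ∀ x, f x ≤ g x) {x₀ : X} (hlt : f x₀ < g x₀) :
    pExp p0 ν l f < pExp p0 ν l g :=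
  hf.tsum_lt_tsum (fun x => mul_le_mul_of_nonneg_left (hle x) (pLL_pos hp0 hZl x).le)
    (mul_lt_mul_of_pos_left hlt (pLL_pos hp0 hZl x₀)) hg

lemma pExp_finsetSum {ι : Type*} (s : Finset ι) (f : ι → X → ℝ)
    (hf : ∀ i ∈ s, Summable fun x => pLL p0 ν l x * f i x) :
    pExp p0 ν l (fun x => ∑ i ∈ s, f i x) = ∑ i ∈ s, pExp p0 ν l (f i) := by
  simp only [pExp, Finset.mul_sum]
  exact Summable.tsum_finsetSum hf

lemma kExp_wdot (y : Y) (γ : Fin n → ℝ)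
    (hk : ∀ i, Summable fun x : {x : X // Yf x = y} =>
      (pLL p0 ν l x.1 / pLLY Yf p0 ν l y) * (ν i x.1 : ℝ)) :
    kExp Yf p0 ν l y (fun x => wdot γ ν x) = ∑ i, γ i * kExp Yf p0 ν l y fun x => (ν i x : ℝ) := by
  simp only [kExp, wdot, Finset.mul_sum, ← tsum_mul_left]
  rw [← Summable.tsum_finsetSum fun i _ => (hk i).mul_left (γ i)]
  exact tsum_congr fun x => Finset.sum_congr rfl fun i _ => by ring

lemma summable_scaled_of_summable (hν : ∀ x, 1 ≤ nuSharp ν x) (i : Fin n) (t : ℝ)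
    (hsum : Summable fun x => pLL p0 ν l x * ((ν i x : ℝ) * Real.exp (t * nuSharp ν x))) :
    Summable fun x =>
      pLL p0 ν l x * (((ν i x : ℝ) / nuSharp ν x) * Real.exp (t * nuSharp ν x)) := by
  refine (summable_abs_iff.2 hsum).of_norm_bounded fun x => ?_
  have hdiv : pLL p0 ν l x * (((ν i x : ℝ) / nuSharp ν x) * Real.exp (t * nuSharp ν x))
      = pLL p0 ν l x * ((ν i x : ℝ) * Real.exp (t * nuSharp ν x)) / nuSharp ν x := by ring
  rw [Real.norm_eq_abs, hdiv, abs_div, Nat.abs_cast]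
  exact div_le_self (abs_nonneg _) (by exact_mod_cast hν x)

lemma expMoment_strictMono (hp0 : ∀ x, 0 < p0 x)
    (hZl : Summable fun x => Real.exp (wdot l ν x) * p0 x) (hν : ∀ x, 1 ≤ nuSharp ν x)
    {i : Fin n} (hνi : ∃ x, 0 < ν i x)
    (hsum : ∀ t : ℝ, Summable fun x => pLL p0 ν l x * ((ν i x : ℝ) * Real.exp (t * nuSharp ν x))) :
    StrictMono (expMoment p0 ν l i) := by
  intro s t hst
  obtain ⟨x₀, hx₀⟩ := hνi
  refine pExp_lt_pExp hp0 hZl (hsum s) (hsum t) (fun x => by gcongr) (x₀ := x₀) ?_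
  have hsharp : (0 : ℝ) < nuSharp ν x₀ := Nat.cast_pos.2 (hν x₀)
  exact mul_lt_mul_of_pos_left (Real.exp_lt_exp.2 (mul_lt_mul_of_pos_right hst hsharp))
    (Nat.cast_pos.2 hx₀)

lemma Aaux_eq_sum_auxCoord_add_card (hν : ∀ x, 1 ≤ nuSharp ν x)
    (hk : ∀ i : Fin n, ∀ y ∈ 𝒴, Summable fun x : {x : X // Yf x = y} =>
      (pLL p0 ν l x.1 / pLLY Yf p0 ν l y) * (ν i x.1 : ℝ))
    (hsum : ∀ (i : Fin n) (t : ℝ),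
      Summable fun x => pLL p0 ν l x * ((ν i x : ℝ) * Real.exp (t * nuSharp ν x)))
    (γ : Fin n → ℝ) :
    Aaux Yf p0 ν 𝒴 γ l = ∑ i, auxCoord Yf p0 ν 𝒴 l i (γ i) + Multiset.card 𝒴 := by
  have hp : pExp p0 ν l (fun x => ∑ i, ((ν i x : ℝ) / nuSharp ν x) * Real.exp (γ i * nuSharp ν x))
      = ∑ i, scaledMoment p0 ν l i (γ i) :=
    pExp_finsetSum _ _ fun i _ => summable_scaled_of_summable hν i (γ i) (hsum i (γ i))
  unfold Aaux
  have hswap : (𝒴.map fun y => ∑ i, γ i * kExp Yf p0 ν l y fun x => (ν i x : ℝ)).sum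
      = ∑ i, (𝒴.map fun y => γ i * kExp Yf p0 ν l y fun x => (ν i x : ℝ)).sum :=
    Multiset.sum_map_sum_map _ _
  rw [Multiset.map_congr rfl fun y hy => by rw [kExp_wdot Yf y γ fun i => hk i y hy, hp],
    Multiset.sum_map_sub, Multiset.sum_map_add, hswap]
  simp only [auxCoord, condCount, Multiset.map_const', Multiset.sum_replicate, nsmul_eq_mul,
    Multiset.sum_map_mul_right, Finset.sum_sub_distrib, Finset.mul_sum, mul_comm (γ _)]
  ring

lemma hasDerivAt_auxCoord {i : Fin n} {t : ℝ}
    (hψ : HasDerivAt (scaledMoment p0 ν l i) (expMoment p0 ν l i t) t) :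
    HasDerivAt (auxCoord Yf p0 ν 𝒴 l i)
      (condCount Yf p0 ν 𝒴 l i - Multiset.card 𝒴 * expMoment p0 ν l i t) t :=
  (((hasDerivAt_id' t).const_mul _).sub (hψ.const_mul _)).congr_deriv (by ring)

end LogLinear

theorem auxiliary_strictly_concave_and_stationarity_general
    {X Y : Type*} (Yf : X → Y)
    (p0 : X → ℝ) (hp0 : ∀ x, 0 < p0 x)
    {n : ℕ} (ν : Fin n → X → ℕ) (hν : ∀ x, 1 ≤ nuSharp ν x)
    (hνpos : ∀ i : Fin n, ∃ x : X, 0 < ν i x)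
    (𝒴 : Multiset Y) (h𝒴 : 𝒴 ≠ 0) (l : Fin n → ℝ)
    (hZl : Summable fun x : X => Real.exp (wdot l ν x) * p0 x)
    (hkisum : ∀ i : Fin n, ∀ y ∈ 𝒴, Summable fun x : {x : X // Yf x = y} =>
      (pLL p0 ν l x.1 / pLLY Yf p0 ν l y) * (ν i x.1 : ℝ))
    (hpisum : ∀ (γ : Fin n → ℝ) (i : Fin n), Summable fun x : X =>
      pLL p0 ν l x * ((ν i x : ℝ) * Real.exp (γ i * (nuSharp ν x : ℝ))))
    (hpd : ∀ (γ : Fin n → ℝ) (i : Fin n),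
      HasDerivAt (fun t : ℝ => pExp p0 ν l
          (fun x => ((ν i x : ℝ) / (nuSharp ν x : ℝ)) * Real.exp (t * (nuSharp ν x : ℝ))))
        (pExp p0 ν l (fun x => (ν i x : ℝ) * Real.exp (γ i * (nuSharp ν x : ℝ))))
        (γ i)) :
    StrictConcaveOn ℝ (Set.univ : Set (Fin n → ℝ)) (fun γ => Aaux Yf p0 ν 𝒴 γ l) ∧
    (∀ γh : Fin n → ℝ,
      (∀ γ : Fin n → ℝ, Aaux Yf p0 ν 𝒴 γ l ≤ Aaux Yf p0 ν 𝒴 γh l) ↔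
      (∀ i : Fin n,
        (𝒴.map fun y => kExp Yf p0 ν l y (fun x => (ν i x : ℝ))).sum =
        (𝒴.map fun _ => pExp p0 ν l
          (fun x => (ν i x : ℝ) * Real.exp (γh i * (nuSharp ν x : ℝ)))).sum)) ∧
    (∀ γ₁ γ₂ : Fin n → ℝ,
      (∀ γ : Fin n → ℝ, Aaux Yf p0 ν 𝒴 γ l ≤ Aaux Yf p0 ν 𝒴 γ₁ l) →
      (∀ γ : Fin n → ℝ, Aaux Yf p0 ν 𝒴 γ l ≤ Aaux Yf p0 ν 𝒴 γ₂ l) →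
      γ₁ = γ₂) := by
  have hm : (0 : ℝ) < Multiset.card 𝒴 := Nat.cast_pos.2 (Multiset.card_pos.2 h𝒴)
  have hderiv : ∀ i t, HasDerivAt (auxCoord Yf p0 ν 𝒴 l i)
      (condCount Yf p0 ν 𝒴 l i - Multiset.card 𝒴 * expMoment p0 ν l i t) t :=
    fun i t => hasDerivAt_auxCoord Yf 𝒴 (hpd (fun _ => t) i)
  have hcoord : ∀ i, StrictConcaveOn ℝ univ (auxCoord Yf p0 ν 𝒴 l i) := fun i =>
    StrictAnti.strictConcaveOn_univ_of_hasDerivAt (hderiv i) fun s t hst =>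
      sub_lt_sub_left (mul_lt_mul_of_pos_left
        (expMoment_strictMono hp0 hZl hν (hνpos i) (fun t => hpisum (fun _ => t) i) hst) hm) _
  have hA := Aaux_eq_sum_auxCoord_add_card Yf 𝒴 hν hkisum fun i t => hpisum (fun _ => t) i
  have hconc : StrictConcaveOn ℝ univ (fun γ => Aaux Yf p0 ν 𝒴 γ l) :=
    funext hA ▸ (strictConcaveOn_univ_sum_apply hcoord).add_const _
  have hmax : ∀ γh, (∀ γ, Aaux Yf p0 ν 𝒴 γ l ≤ Aaux Yf p0 ν 𝒴 γh l) ↔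
      ∀ i, IsMaxOn (auxCoord Yf p0 ν 𝒴 l i) univ (γh i) := fun γh => by
    rw [← isMaxOn_univ_sum_apply_iff]
    simp only [isMaxOn_univ_iff, hA, add_le_add_iff_right]
  refine ⟨hconc, fun γh => (hmax γh).trans (forall_congr' fun i => ?_),
    fun γ₁ γ₂ h₁ h₂ => hconc.eq_of_isMaxOn (isMaxOn_univ_iff.2 h₁) (isMaxOn_univ_iff.2 h₂)
      trivial trivial⟩
  rw [(hcoord i).concaveOn.isMaxOn_univ_iff_hasDerivAt (hderiv i (γh i)), sub_eq_zero,
    Multiset.map_const', Multiset.sum_replicate, nsmul_eq_mul]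
  rfl

/-- `A(·,λ)` is strictly concave; `γ̂` is a global maximizer iff the
stationarity equations `∑_y k_λ[ν_i] = ∑_y p_λ[ν_i e^{γ̂_i ν_#}]` hold, and the
maximizer (if it exists) is unique. -/
theorem auxiliary_strictly_concave_and_stationarity
    {X Y : Type*} [Countable X] (Yf : X → Y)
    (p0 : X → ℝ) (hp0 : ∀ x, 0 < p0 x) (hp0sum : ∑' x : X, p0 x = 1)
    {n : ℕ} (ν : Fin n → X → ℕ) (hν : ∀ x, 1 ≤ nuSharp ν x)
    (hνpos : ∀ i : Fin n, ∃ x : X, 0 < ν i x)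
    (𝒴 : Multiset Y) (h𝒴 : 𝒴 ≠ 0) (l : Fin n → ℝ)
    (hZl : Summable fun x : X => Real.exp (wdot l ν x) * p0 x)
    (hpos : ∀ y ∈ 𝒴, 0 < pLLY Yf p0 ν l y)
    (hksum : ∀ γ : Fin n → ℝ, ∀ y ∈ 𝒴, Summable fun x : {x : X // Yf x = y} =>
      (pLL p0 ν l x.1 / pLLY Yf p0 ν l y) * wdot γ ν x.1)
    (hkisum : ∀ i : Fin n, ∀ y ∈ 𝒴, Summable fun x : {x : X // Yf x = y} =>
      (pLL p0 ν l x.1 / pLLY Yf p0 ν l y) * (ν i x.1 : ℝ))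
    (hpsum : ∀ γ : Fin n → ℝ, Summable fun x : X => pLL p0 ν l x *
      ∑ i, ((ν i x : ℝ) / (nuSharp ν x : ℝ)) * Real.exp (γ i * (nuSharp ν x : ℝ)))
    (hpisum : ∀ (γ : Fin n → ℝ) (i : Fin n), Summable fun x : X =>
      pLL p0 ν l x * ((ν i x : ℝ) * Real.exp (γ i * (nuSharp ν x : ℝ))))
    (hpd : ∀ (γ : Fin n → ℝ) (i : Fin n),
      HasDerivAt (fun t : ℝ => pExp p0 ν l
          (fun x => ((ν i x : ℝ) / (nuSharp ν x : ℝ)) * Real.exp (t * (nuSharp ν x : ℝ))))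
        (pExp p0 ν l (fun x => (ν i x : ℝ) * Real.exp (γ i * (nuSharp ν x : ℝ))))
        (γ i)) :
    StrictConcaveOn ℝ (Set.univ : Set (Fin n → ℝ)) (fun γ => Aaux Yf p0 ν 𝒴 γ l) ∧
    (∀ γh : Fin n → ℝ,
      (∀ γ : Fin n → ℝ, Aaux Yf p0 ν 𝒴 γ l ≤ Aaux Yf p0 ν 𝒴 γh l) ↔
      (∀ i : Fin n,
        (𝒴.map fun y => kExp Yf p0 ν l y (fun x => (ν i x : ℝ))).sum =
        (𝒴.map fun _ => pExp p0 ν l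
          (fun x => (ν i x : ℝ) * Real.exp (γh i * (nuSharp ν x : ℝ)))).sum)) ∧
    (∀ γ₁ γ₂ : Fin n → ℝ,
      (∀ γ : Fin n → ℝ, Aaux Yf p0 ν 𝒴 γ l ≤ Aaux Yf p0 ν 𝒴 γ₁ l) →
      (∀ γ : Fin n → ℝ, Aaux Yf p0 ν 𝒴 γ l ≤ Aaux Yf p0 ν 𝒴 γ₂ l) →
      γ₁ = γ₂) :=
  auxiliary_strictly_concave_and_stationarity_general Yf p0 hp0 ν hν hνpos 𝒴 h𝒴 l hZl hkisum hpisum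
    hpd
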